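/- Let A be a closed subset of a real Hilbert space X, x̄ ∈ A, δ > 0, λ > 0 and q > 0. Suppose b ∉ A and ‖b−a‖^{q−2}·d(b−a, N^F_A(a)) ≥ δ for all a ∈ A ∩ B_λ(x̄) with ‖b−a‖^q < d^q(b,A) + qλδ. Then d^q(b,A) ≤ ‖b−x̄‖^q − qλδ. -/

import Mathlib

/-- The Fréchet normal cone to `Ω` at `xbar` in a real Hilbert space (identified with its
dual): `{v : limsup_{Ω∋x→xbar, x≠xbar} ⟨v, x−xbar⟩/‖x−xbar‖ ≤ 0}`. -/
def frechetNormal {X : Type*} [NormedAddCommGroup X] [InnerProductSpace ℝ X]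
    (Ω : Set X) (xbar : X) : Set X :=
  {v : X | ∀ ε > (0 : ℝ), ∃ δ > (0 : ℝ), ∀ x ∈ Ω, x ≠ xbar → ‖x - xbar‖ < δ →
    (inner ℝ v (x - xbar) : ℝ) ≤ ε * ‖x - xbar‖}

/-!
Argue by contradiction: if `d(b, A)^q > ‖b - x̄‖^q - qλδ`, then `x̄` is an `ε₀`-minimizer of
`f = ‖b - ·‖^q` on `A` with `ε₀ < qλδ`. A Borwein–Preiss smooth variational principle, whose
penalty `√(‖h‖² + a²) - a` is smooth, `1`-Lipschitz and has `(1/a)`-Lipschitz gradient, produces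
`p ∈ A ∩ B_λ(x̄)` with `f p < d(b, A)^q + qλδ` and a proximal subgradient `u` of `f` on `A` at `p`
with `‖u‖ ≤ K < qδ`. As `f` is differentiable at `p ≠ b` with gradient
`-q‖b - p‖^(q-2) (b - p)`, the vector `q‖b - p‖^(q-2) (b - p) + u` is a Fréchet normal to `A`
at `p`, whence `‖b - p‖^(q-2) d(b - p, N_A(p)) ≤ K / q < δ`, contradicting the hypothesis.
-/

open Finset Filter Topology Metric

section SmoothNorm

variable {X : Type*} [NormedAddCommGroup X] {a : ℝ}

noncomputable def smoothNorm (a : ℝ) (h : X) : ℝ := √(‖h‖ ^ 2 + a ^ 2)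

lemma sq_smoothNorm (a : ℝ) (h : X) : smoothNorm a h ^ 2 = ‖h‖ ^ 2 + a ^ 2 :=
  Real.sq_sqrt (by positivity)

lemma smoothNorm_nonneg (a : ℝ) (h : X) : 0 ≤ smoothNorm a h := Real.sqrt_nonneg _

lemma le_smoothNorm (a : ℝ) (h : X) : a ≤ smoothNorm a h :=
  Real.le_sqrt_of_sq_le (by nlinarith [norm_nonneg h])

lemma norm_le_smoothNorm (a : ℝ) (h : X) : ‖h‖ ≤ smoothNorm a h :=
  Real.le_sqrt_of_sq_le (by nlinarith [sq_nonneg a])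

lemma smoothNorm_le (ha : 0 ≤ a) (h : X) : smoothNorm a h ≤ ‖h‖ + a :=
  Real.sqrt_le_iff.mpr ⟨by positivity, by nlinarith [norm_nonneg h]⟩

lemma smoothNorm_zero (ha : 0 ≤ a) : smoothNorm a (0 : X) = a := by
  simp [smoothNorm, Real.sqrt_sq ha]

lemma continuous_smoothNorm (a : ℝ) : Continuous (smoothNorm (X := X) a) := by
  unfold smoothNorm; fun_prop

lemma norm_sq_le_of_smoothNorm_le {t : ℝ} {h : X} (ht : smoothNorm a h ≤ a + t) :
    ‖h‖ ^ 2 ≤ t * (2 * a + t) := by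
  have := pow_le_pow_left₀ (smoothNorm_nonneg a h) ht 2
  rw [sq_smoothNorm] at this
  nlinarith

variable [InnerProductSpace ℝ X]

noncomputable def smoothNormGrad (a : ℝ) (h : X) : X := (smoothNorm a h)⁻¹ • h

lemma norm_smoothNormGrad_le (a : ℝ) (h : X) : ‖smoothNormGrad a h‖ ≤ 1 := by
  rw [smoothNormGrad, norm_smul, norm_inv, Real.norm_of_nonneg (smoothNorm_nonneg a h)]
  exact inv_mul_le_one_of_le₀ (norm_le_smoothNorm a h) (smoothNorm_nonneg a h)

lemma smoothNorm_add_le (ha : 0 < a) (h Δ : X) :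
    smoothNorm a (h + Δ) ≤
      smoothNorm a h + inner ℝ (smoothNormGrad a h) Δ + ‖Δ‖ ^ 2 / (2 * a) := by
  set s := smoothNorm a h
  set s' := smoothNorm a (h + Δ)
  have hs : a ≤ s := le_smoothNorm a h
  have hs' : s' ^ 2 = s ^ 2 + 2 * inner ℝ h Δ + ‖Δ‖ ^ 2 := by
    rw [sq_smoothNorm, sq_smoothNorm, norm_add_sq_real]; ring
  -- `s (s' - s) - ⟪h, Δ⟫ = (‖Δ‖² - (s' - s)²) / 2`
  have key : s * (s' - s) ≤ inner ℝ h Δ + ‖Δ‖ ^ 2 / 2 := by nlinarith [sq_nonneg (s' - s)]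
  have hquad : ‖Δ‖ ^ 2 / (2 * s) ≤ ‖Δ‖ ^ 2 / (2 * a) := by gcongr
  rw [smoothNormGrad, real_inner_smul_left]
  have hs0 : 0 < s := ha.trans_le hs
  have : s' - s ≤ s⁻¹ * inner ℝ h Δ + ‖Δ‖ ^ 2 / (2 * s) := by
    rw [← sub_nonneg]
    have : s⁻¹ * inner ℝ h Δ + ‖Δ‖ ^ 2 / (2 * s) - (s' - s)
        = (inner ℝ h Δ + ‖Δ‖ ^ 2 / 2 - s * (s' - s)) / s := by field_simp
    rw [this]; exact div_nonneg (by linarith) hs0.le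
  linarith

end SmoothNorm

section FrechetNormal

variable {X : Type*} [NormedAddCommGroup X] [InnerProductSpace ℝ X] {A : Set X} {p : X}

lemma smul_mem_frechetNormal {v : X} (hv : v ∈ frechetNormal A p) {t : ℝ} (ht : 0 < t) :
    t • v ∈ frechetNormal A p := by
  intro ε hε
  obtain ⟨η, hη, hv⟩ := hv (ε / t) (by positivity)
  refine ⟨η, hη, fun x hx hxp hxη => ?_⟩
  rw [real_inner_smul_left]
  calc t * inner ℝ v (x - p) ≤ t * (ε / t * ‖x - p‖) := by gcongr; exact hv x hx hxp hxη
    _ = ε * ‖x - p‖ := by field_simp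

lemma infDist_frechetNormal_le {v u : X} {s : ℝ} (hs : 0 < s) (h : s • v + u ∈ frechetNormal A p) :
    infDist v (frechetNormal A p) ≤ ‖u‖ / s := by
  have hmem := smul_mem_frechetNormal h (inv_pos.mpr hs)
  calc infDist v (frechetNormal A p) ≤ dist v (s⁻¹ • (s • v + u)) := infDist_le_dist_of_mem hmem
    _ = ‖u‖ / s := by
      rw [smul_add, smul_smul, inv_mul_cancel₀ hs.ne', one_smul, dist_eq_norm, sub_add_cancel_left,
        norm_neg, norm_smul, norm_inv, Real.norm_of_nonneg hs.le, inv_mul_eq_div]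

lemma sub_mem_frechetNormal_of_hasFDerivAt {F : X → ℝ} {g u : X}
    (hF : HasFDerivAt F (innerSL ℝ g) p) (hu : ∀ x ∈ A, inner ℝ u (x - p) ≤ F x - F p) :
    u - g ∈ frechetNormal A p := by
  intro ε hε
  obtain ⟨η, hη, hball⟩ := Metric.eventually_nhds_iff.mp
    (Asymptotics.isLittleO_iff.mp hF.isLittleO hε)
  refine ⟨η, hη, fun x hx _ hxη => ?_⟩
  have hsmall := hball (show dist x p < η by rwa [dist_eq_norm])
  rw [Real.norm_eq_abs, innerSL_apply_apply] at hsmall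
  rw [inner_sub_left]
  linarith [hu x hx, (abs_le.mp hsmall).2]

end FrechetNormal

lemma exists_seq_of_forall_exists_prefix {α : Type*} (x₀ : α) (P : ℕ → (ℕ → α) → α → Prop)
    (hP : ∀ n c c', (∀ k ≤ n, c k = c' k) → P n c = P n c') (h : ∀ n c, ∃ y, P n c y) :
    ∃ c : ℕ → α, c 0 = x₀ ∧ ∀ n, P n c (c (n + 1)) := by
  choose next hnext using h
  let T : ℕ → ℕ → α := fun n =>
    Nat.rec (fun _ => x₀) (fun m prev => Function.update prev (m + 1) (next m prev)) n
  have hT : ∀ n k, k ≤ n → T n k = T k k := by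
    intro n
    induction n with
    | zero => intro k hk; obtain rfl := Nat.le_zero.mp hk; rfl
    | succ n ih =>
      intro k hk
      rcases Nat.lt_or_eq_of_le hk with hk | rfl
      · rw [show T (n + 1) = Function.update (T n) (n + 1) (next n (T n)) from rfl,
          Function.update_of_ne (by omega)]
        exact ih k (by omega)
      · rfl
  refine ⟨fun n => T n n, rfl, fun n => ?_⟩
  show P n (fun k => T k k) (T (n + 1) (n + 1))
  rw [show T (n + 1) (n + 1) = next n (T n) from Function.update_self .., ← hP n (T n) _ (hT n)]
  exact hnext n (T n)

lemma exists_forall_lt_add_of_bddBelow {α : Type*} {A : Set α} {g : α → ℝ} (hA : A.Nonempty)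
    (hg : BddBelow (g '' A)) {γ : ℝ} (hγ : 0 < γ) : ∃ y ∈ A, ∀ z ∈ A, g y < g z + γ := by
  obtain ⟨_, ⟨y, hy, rfl⟩, hlt⟩ := Real.lt_sInf_add_pos (hA.image g) hγ
  exact ⟨y, hy, fun z hz => hlt.trans_le (by gcongr; exact csInf_le hg ⟨z, hz, rfl⟩)⟩

section BorweinPreiss

variable {X : Type*} [NormedAddCommGroup X] {A : Set X} {f : X → ℝ} {K μ a ε : ℝ}
  {c : ℕ → X} {n : ℕ} {y p : X}

noncomputable def bpObjective (f : X → ℝ) (K μ a : ℝ) (c : ℕ → X) (n : ℕ) (y : X) : ℝ :=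
  f y + K * (1 - μ) * ∑ k ∈ range (n + 1), μ ^ k * (smoothNorm a (y - c k) - a)

noncomputable def bpLimitObjective (f : X → ℝ) (K μ a : ℝ) (c : ℕ → X) (y : X) : ℝ :=
  f y + K * (1 - μ) * ∑' k, μ ^ k * (smoothNorm a (y - c k) - a)

/-- The exponent `3n + 1` makes `(bpTolerance n + bpTolerance (n+1)) / (K (1 - μ) μ^(n+1))`,
which bounds the penalty of the `n`-th step, of order `μ^(2n)`; the steps are then geometric. -/
def bpTolerance (μ ε : ℝ) (n : ℕ) : ℝ := ε * (1 - μ) * μ ^ (3 * n + 1)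

def IsBPSequence (A : Set X) (f : X → ℝ) (K μ a ε : ℝ) (c : ℕ → X) : Prop :=
  ∀ n, c (n + 1) ∈ A ∧ ∀ y ∈ A,
    bpObjective f K μ a c n (c (n + 1)) < bpObjective f K μ a c n y + bpTolerance μ ε n

lemma bpObjective_congr {c' : ℕ → X} (h : ∀ k ≤ n, c k = c' k) :
    bpObjective f K μ a c n = bpObjective f K μ a c' n := by
  ext y
  unfold bpObjective
  congr 2
  exact sum_congr rfl fun k hk => by rw [h k (Nat.lt_succ_iff.mp (mem_range.mp hk))]

lemma bpObjective_succ :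
    bpObjective f K μ a c (n + 1) y =
      bpObjective f K μ a c n y +
        K * (1 - μ) * μ ^ (n + 1) * (smoothNorm a (y - c (n + 1)) - a) := by
  simp only [bpObjective, sum_range_succ _ (n + 1)]
  ring

lemma bpObjective_zero_self (ha : 0 ≤ a) : bpObjective f K μ a c 0 (c 0) = f (c 0) := by
  simp [bpObjective, smoothNorm_zero ha]

lemma bpObjective_succ_self (ha : 0 ≤ a) :
    bpObjective f K μ a c (n + 1) (c (n + 1)) = bpObjective f K μ a c n (c (n + 1)) := by
  simp [bpObjective_succ, smoothNorm_zero ha]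

lemma monotone_bpObjective (hK : 0 ≤ K) (hμ0 : 0 ≤ μ) (hμ1 : μ ≤ 1) (y : X) :
    Monotone fun n => bpObjective f K μ a c n y := by
  refine monotone_nat_of_le_succ fun n => ?_
  rw [bpObjective_succ]
  have := sub_nonneg.mpr (le_smoothNorm a (y - c (n + 1)))
  have := sub_nonneg.mpr hμ1
  exact le_add_of_nonneg_right (by positivity)

lemma bddBelow_bpObjective (hf : BddBelow (f '' A)) (hK : 0 ≤ K) (hμ0 : 0 ≤ μ) (hμ1 : μ ≤ 1) :
    BddBelow (bpObjective f K μ a c n '' A) := by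
  obtain ⟨m, hm⟩ := hf
  refine ⟨m, ?_⟩
  rintro _ ⟨y, hy, rfl⟩
  have hpen : 0 ≤ ∑ k ∈ range (n + 1), μ ^ k * (smoothNorm a (y - c k) - a) :=
    sum_nonneg fun k _ => mul_nonneg (pow_nonneg hμ0 k) (sub_nonneg.mpr (le_smoothNorm a _))
  have h1μ : 0 ≤ 1 - μ := sub_nonneg.mpr hμ1
  have hfy := hm ⟨y, hy, rfl⟩
  unfold bpObjective
  nlinarith [mul_nonneg (mul_nonneg hK h1μ) hpen]

lemma bpTolerance_pos (hε : 0 < ε) (hμ0 : 0 < μ) (hμ1 : μ < 1) (n : ℕ) :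
    0 < bpTolerance μ ε n := by
  have : 0 < 1 - μ := sub_pos.mpr hμ1
  unfold bpTolerance; positivity

lemma sum_bpTolerance_le (hε : 0 ≤ ε) (hμ0 : 0 < μ) (hμ1 : μ < 1) (n : ℕ) :
    ∑ k ∈ range n, bpTolerance μ ε k ≤ ε := by
  have h1μ : 0 < 1 - μ := sub_pos.mpr hμ1
  calc ∑ k ∈ range n, bpTolerance μ ε k ≤ ∑ k ∈ range n, ε * (1 - μ) * μ ^ k := by
        refine sum_le_sum fun k _ => mul_le_mul_of_nonneg_left ?_ (by positivity)
        exact pow_le_pow_of_le_one hμ0.le hμ1.le (by omega)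
    _ = ε * (1 - μ) * ∑ k ∈ range n, μ ^ k := by rw [mul_sum]
    _ ≤ ε * (1 - μ) * (μ ^ 0 / (1 - μ)) := by
        rw [range_eq_Ico]
        exact mul_le_mul_of_nonneg_left (geom_sum_Ico_le_of_lt_one hμ0.le hμ1) (by positivity)
    _ = ε := by field_simp

lemma tendsto_bpTolerance (hμ0 : 0 ≤ μ) (hμ1 : μ < 1) :
    Tendsto (bpTolerance μ ε) atTop (𝓝 0) := by
  have h3n : Tendsto (fun n : ℕ => 3 * n + 1) atTop atTop :=
    tendsto_atTop_mono (fun n => show n ≤ 3 * n + 1 by omega) tendsto_id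
  show Tendsto (fun n => ε * (1 - μ) * μ ^ (3 * n + 1)) atTop (𝓝 0)
  simpa using ((tendsto_pow_atTop_nhds_zero_of_lt_one hμ0 hμ1).comp h3n).const_mul (ε * (1 - μ))

lemma exists_isBPSequence {x₀ : X} (hx₀ : x₀ ∈ A) (hf : BddBelow (f '' A)) (hK : 0 ≤ K)
    (hμ0 : 0 < μ) (hμ1 : μ < 1) (hε : 0 < ε) :
    ∃ c, c 0 = x₀ ∧ IsBPSequence A f K μ a ε c :=
  exists_seq_of_forall_exists_prefix x₀
    (fun n c y => y ∈ A ∧ ∀ z ∈ A,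
      bpObjective f K μ a c n y < bpObjective f K μ a c n z + bpTolerance μ ε n)
    (fun n c c' h => by simp only [bpObjective_congr h])
    (fun n c => by
      obtain ⟨y, hy, hmin⟩ := exists_forall_lt_add_of_bddBelow ⟨x₀, hx₀⟩
        (bddBelow_bpObjective (c := c) (n := n) (a := a) hf hK hμ0.le hμ1.le)
        (bpTolerance_pos hε hμ0 hμ1 n)
      exact ⟨y, hy, hmin⟩)

namespace IsBPSequence

lemma mem (hc : IsBPSequence A f K μ a ε c) (hc₀ : c 0 ∈ A) (n : ℕ) : c n ∈ A := by
  cases n with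
  | zero => exact hc₀
  | succ n => exact (hc n).1

lemma smoothNorm_step_lt (hc : IsBPSequence A f K μ a ε c) (ha : 0 ≤ a) (n : ℕ) :
    K * (1 - μ) * μ ^ (n + 1) * (smoothNorm a (c (n + 2) - c (n + 1)) - a) <
      bpTolerance μ ε n + bpTolerance μ ε (n + 1) := by
  have h₁ := (hc (n + 1)).2 (c (n + 1)) (hc n).1
  have h₂ := (hc n).2 (c (n + 2)) (hc (n + 1)).1
  rw [bpObjective_succ_self ha, bpObjective_succ] at h₁
  linarith

lemma norm_step_le (hc : IsBPSequence A f K μ a ε c) (hK : 0 < K) (ha : 0 ≤ a) (hε : 0 ≤ ε)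
    (hμ0 : 0 < μ) (hμ1 : μ < 1) (n : ℕ) :
    ‖c (n + 2) - c (n + 1)‖ ≤ √(2 * ε / K * (2 * a + 2 * ε / K)) * μ ^ n := by
  set t := 2 * ε / K * (μ ^ n) ^ 2
  have h1μ : 0 < 1 - μ := sub_pos.mpr hμ1
  have htol : bpTolerance μ ε n + bpTolerance μ ε (n + 1) ≤
      K * (1 - μ) * μ ^ (n + 1) * t := by
    calc bpTolerance μ ε n + bpTolerance μ ε (n + 1) ≤ 2 * bpTolerance μ ε n := by
          have := pow_le_pow_of_le_one hμ0.le hμ1.le (show 3 * n + 1 ≤ 3 * (n + 1) + 1 by omega)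
          have := mul_le_mul_of_nonneg_left this (by positivity : 0 ≤ ε * (1 - μ))
          simp only [bpTolerance]
          linarith
      _ = K * (1 - μ) * μ ^ (n + 1) * t := by
          simp only [bpTolerance, t]
          field_simp
          ring
  have hs : smoothNorm a (c (n + 2) - c (n + 1)) ≤ a + t := by
    have := (hc.smoothNorm_step_lt ha n).trans_le htol
    have : 0 < K * (1 - μ) * μ ^ (n + 1) := by positivity
    nlinarith
  have ht : t ≤ 2 * ε / K := by
    have : (μ ^ n) ^ 2 ≤ 1 := pow_le_one₀ (by positivity) (pow_le_one₀ hμ0.le hμ1.le)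
    exact mul_le_of_le_one_right (by positivity) this
  have hsq : ‖c (n + 2) - c (n + 1)‖ ^ 2 ≤ (2 * ε / K * (2 * a + 2 * ε / K)) * (μ ^ n) ^ 2 := by
    have := norm_sq_le_of_smoothNorm_le hs
    have : 0 ≤ t := by positivity
    nlinarith
  calc ‖c (n + 2) - c (n + 1)‖ ≤ √((2 * ε / K * (2 * a + 2 * ε / K)) * (μ ^ n) ^ 2) :=
        Real.le_sqrt_of_sq_le hsq
    _ = _ := by rw [Real.sqrt_mul (by positivity), Real.sqrt_sq (by positivity)]

lemma exists_tendsto [CompleteSpace X] (hc : IsBPSequence A f K μ a ε c) (hK : 0 < K)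
    (ha : 0 ≤ a) (hε : 0 ≤ ε) (hμ0 : 0 < μ) (hμ1 : μ < 1) :
    ∃ p, Tendsto c atTop (𝓝 p) := by
  have hcauchy : CauchySeq fun n => c (n + 1) :=
    cauchySeq_of_le_geometric μ _ hμ1 fun n => by
      rw [dist_eq_norm, norm_sub_rev]; exact hc.norm_step_le hK ha hε hμ0 hμ1 n
  obtain ⟨p, hp⟩ := cauchySeq_tendsto_of_complete hcauchy
  exact ⟨p, (tendsto_add_atTop_iff_nat 1).mp hp⟩

end IsBPSequence

lemma summable_mul_smoothNorm_sub {w : ℕ → ℝ} (hw0 : ∀ k, 0 ≤ w k) (hw : Summable w)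
    (ha : 0 ≤ a) (hc : Bornology.IsBounded (Set.range c)) (y : X) :
    Summable fun k => w k * (smoothNorm a (y - c k) - a) := by
  obtain ⟨R, hR⟩ := isBounded_iff_forall_norm_le.mp hc
  refine Summable.of_nonneg_of_le (fun k => mul_nonneg (hw0 k) (sub_nonneg.mpr (le_smoothNorm a _)))
    (fun k => mul_le_mul_of_nonneg_left ?_ (hw0 k)) (hw.mul_right (‖y‖ + R))
  calc smoothNorm a (y - c k) - a ≤ ‖y - c k‖ := by linarith [smoothNorm_le ha (y - c k)]
    _ ≤ ‖y‖ + R := (norm_sub_le _ _).trans (by gcongr; exact hR _ ⟨k, rfl⟩)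

lemma continuous_bpObjective (hf : Continuous f) : Continuous (bpObjective f K μ a c n) :=
  hf.add <| continuous_const.mul <| continuous_finsetSum _ fun _ _ => continuous_const.mul <|
    ((continuous_smoothNorm a).comp (continuous_id.sub continuous_const)).sub continuous_const

lemma tendsto_bpObjective (hμ0 : 0 ≤ μ) (hμ1 : μ < 1) (ha : 0 ≤ a)
    (hc : Bornology.IsBounded (Set.range c)) (y : X) :
    Tendsto (fun n => bpObjective f K μ a c n y) atTop (𝓝 (bpLimitObjective f K μ a c y)) := by
  have hsum := (summable_mul_smoothNorm_sub (fun k => pow_nonneg hμ0 k)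
    (summable_geometric_of_lt_one hμ0 hμ1) ha hc y).hasSum.tendsto_sum_nat
  exact ((hsum.comp (tendsto_add_atTop_nat 1)).const_mul (K * (1 - μ))).const_add (f y)

namespace IsBPSequence

lemma bpObjective_self_lt (hc : IsBPSequence A f K μ a ε c) (hc₀ : c 0 ∈ A) (ha : 0 ≤ a)
    (n : ℕ) :
    bpObjective f K μ a c n (c (n + 1)) < f (c 0) + ∑ k ∈ range (n + 1), bpTolerance μ ε k := by
  induction n with
  | zero =>
    simpa [bpObjective_zero_self ha] using (hc 0).2 (c 0) hc₀
  | succ n ih =>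
    have := (hc (n + 1)).2 (c (n + 1)) (hc n).1
    rw [bpObjective_succ_self ha] at this
    rw [sum_range_succ]
    linarith

lemma bpObjective_zero_le (hc : IsBPSequence A f K μ a ε c) (hc₀ : c 0 ∈ A) (hf : Continuous f)
    (hK : 0 ≤ K) (ha : 0 ≤ a) (hε : 0 ≤ ε) (hμ0 : 0 < μ) (hμ1 : μ < 1)
    (hp : Tendsto c atTop (𝓝 p)) :
    bpObjective f K μ a c 0 p ≤ f (c 0) + ε := by
  refine le_of_tendsto ((continuous_bpObjective hf).tendsto p |>.comp
    (hp.comp (tendsto_add_atTop_nat 1))) (Eventually.of_forall fun k => ?_)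
  calc bpObjective f K μ a c 0 (c (k + 1))
      ≤ bpObjective f K μ a c k (c (k + 1)) :=
        monotone_bpObjective hK hμ0.le hμ1.le _ (Nat.zero_le k)
    _ ≤ f (c 0) + ε := by
        linarith [hc.bpObjective_self_lt hc₀ ha k, sum_bpTolerance_le hε hμ0 hμ1 (k + 1)]

lemma bpLimitObjective_le (hc : IsBPSequence A f K μ a ε c) (hf : Continuous f) (hK : 0 ≤ K)
    (ha : 0 ≤ a) (hμ0 : 0 ≤ μ) (hμ1 : μ < 1) (hp : Tendsto c atTop (𝓝 p)) (hy : y ∈ A) :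
    bpLimitObjective f K μ a c p ≤ bpLimitObjective f K μ a c y := by
  have hbdd := isBounded_range_of_tendsto c hp
  have hmono := monotone_bpObjective (f := f) (a := a) (c := c) hK hμ0 hμ1.le
  have htol : Tendsto (fun k => bpLimitObjective f K μ a c y + bpTolerance μ ε k) atTop
      (𝓝 (bpLimitObjective f K μ a c y)) := by
    simpa using tendsto_const_nhds.add (tendsto_bpTolerance hμ0 hμ1)
  refine le_of_tendsto' (tendsto_bpObjective hμ0 hμ1 ha hbdd p) fun m => ?_
  refine le_of_tendsto_of_tendsto ((continuous_bpObjective hf).tendsto p |>.comp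
    (hp.comp (tendsto_add_atTop_nat 1))) htol (eventually_atTop.mpr ⟨m, fun k hk => ?_⟩)
  calc bpObjective f K μ a c m (c (k + 1)) ≤ bpObjective f K μ a c k (c (k + 1)) :=
        hmono _ hk
    _ ≤ bpObjective f K μ a c k y + bpTolerance μ ε k := ((hc k).2 y hy).le
    _ ≤ bpLimitObjective f K μ a c y + bpTolerance μ ε k := by
        gcongr
        exact (hmono y).ge_of_tendsto (tendsto_bpObjective hμ0 hμ1 ha hbdd y) k

end IsBPSequence

variable [InnerProductSpace ℝ X] [CompleteSpace X]

lemma tsum_smoothNorm_sub_le {w : ℕ → ℝ} (hw0 : ∀ k, 0 ≤ w k) (hw : Summable w) (ha : 0 < a)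
    (hc : Bornology.IsBounded (Set.range c)) (p x : X) :
    ∑' k, w k * (smoothNorm a (x - c k) - a) - ∑' k, w k * (smoothNorm a (p - c k) - a) ≤
      inner ℝ (∑' k, w k • smoothNormGrad a (p - c k)) (x - p) +
        (∑' k, w k) * (‖x - p‖ ^ 2 / (2 * a)) := by
  have hgrad : Summable fun k => w k • smoothNormGrad a (p - c k) :=
    Summable.of_norm_bounded hw fun k => by
      rw [norm_smul, Real.norm_of_nonneg (hw0 k)]
      exact mul_le_of_le_one_right (hw0 k) (norm_smoothNormGrad_le a _)
  have hinner : HasSum (fun k => inner ℝ (w k • smoothNormGrad a (p - c k)) (x - p))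
      (inner ℝ (∑' k, w k • smoothNormGrad a (p - c k)) (x - p)) := by
    have := hgrad.hasSum.mapL (innerSL ℝ (x - p))
    simp only [innerSL_apply_apply] at this
    simpa only [real_inner_comm (x - p)] using this
  refine hasSum_le (fun k => ?_)
    ((summable_mul_smoothNorm_sub hw0 hw ha.le hc x).hasSum.sub
      (summable_mul_smoothNorm_sub hw0 hw ha.le hc p).hasSum)
    (hinner.add (hw.hasSum.mul_right _))
  have htaylor := smoothNorm_add_le ha (p - c k) (x - p)
  rw [sub_add_sub_cancel'] at htaylor
  calc w k * (smoothNorm a (x - c k) - a) - w k * (smoothNorm a (p - c k) - a)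
      = w k * (smoothNorm a (x - c k) - smoothNorm a (p - c k)) := by ring
    _ ≤ w k * (inner ℝ (smoothNormGrad a (p - c k)) (x - p) + ‖x - p‖ ^ 2 / (2 * a)) := by
        gcongr
        · exact hw0 k
        · linarith
    _ = _ := by rw [real_inner_smul_left]; ring

theorem IsClosed.borweinPreiss (hA : IsClosed A) {x₀ : X} (hx₀ : x₀ ∈ A) (hf : Continuous f)
    (hfA : BddBelow (f '' A)) (hK : 0 < K) (ha : 0 < a) (hμ0 : 0 < μ) (hμ1 : μ < 1)
    (hε : 0 < ε) :
    ∃ p ∈ A, ∃ u : X, ‖u‖ ≤ K ∧ f p + (1 - μ) * K * (‖p - x₀‖ - a) ≤ f x₀ + ε ∧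
      ∀ x ∈ A, inner ℝ u (x - p) ≤ f x - f p + K / (2 * a) * ‖x - p‖ ^ 2 := by
  obtain ⟨c, rfl, hc⟩ := exists_isBPSequence (a := a) hx₀ hfA hK.le hμ0 hμ1 hε
  obtain ⟨p, hp⟩ := hc.exists_tendsto hK ha.le hε.le hμ0 hμ1
  have hbdd := isBounded_range_of_tendsto c hp
  have h1μ : 0 < 1 - μ := sub_pos.mpr hμ1
  have hgeom := hasSum_geometric_of_lt_one hμ0.le hμ1
  refine ⟨p, hA.mem_of_tendsto hp (Eventually.of_forall (hc.mem hx₀)),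
    -(K * (1 - μ)) • ∑' k, μ ^ k • smoothNormGrad a (p - c k), ?_, ?_, fun x hx => ?_⟩
  · have hS : ‖∑' k, μ ^ k • smoothNormGrad a (p - c k)‖ ≤ (1 - μ)⁻¹ :=
      tsum_of_norm_bounded hgeom fun k => by
        rw [norm_smul, Real.norm_of_nonneg (pow_nonneg hμ0.le k)]
        exact mul_le_of_le_one_right (pow_nonneg hμ0.le k) (norm_smoothNormGrad_le a _)
    rw [norm_smul, norm_neg, Real.norm_of_nonneg (by positivity)]
    calc K * (1 - μ) * ‖∑' k, μ ^ k • smoothNormGrad a (p - c k)‖ ≤ K * (1 - μ) * (1 - μ)⁻¹ := by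
          gcongr
      _ = K := by field_simp
  · have h := hc.bpObjective_zero_le hx₀ hf hK.le ha.le hε.le hμ0 hμ1 hp
    have := norm_le_smoothNorm a (p - c 0)
    simp only [bpObjective, zero_add, range_one, sum_singleton, pow_zero, one_mul] at h
    nlinarith [mul_pos hK h1μ]
  · have hmin := hc.bpLimitObjective_le hf hK.le ha.le hμ0.le hμ1 hp hx
    have htaylor := tsum_smoothNorm_sub_le (fun k => pow_nonneg hμ0.le k) hgeom.summable ha hbdd p x
    rw [hgeom.tsum_eq] at htaylor
    have := mul_le_mul_of_nonneg_left htaylor (by positivity : 0 ≤ K * (1 - μ))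
    rw [real_inner_smul_left, neg_mul]
    simp only [bpLimitObjective] at hmin
    have hK' : K * (1 - μ) * ((1 - μ)⁻¹ * (‖x - p‖ ^ 2 / (2 * a))) = K / (2 * a) * ‖x - p‖ ^ 2 := by
      field_simp
    nlinarith

end BorweinPreiss

section DistanceDecrease

variable {X : Type*} [NormedAddCommGroup X] [InnerProductSpace ℝ X]

lemma sub_mem_frechetNormal_of_proximal {A : Set X} {f : X → ℝ} {g u p : X} {C : ℝ}
    (hf : HasFDerivAt f (innerSL ℝ g) p)
    (hu : ∀ x ∈ A, inner ℝ u (x - p) ≤ f x - f p + C * ‖x - p‖ ^ 2) :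
    u - g ∈ frechetNormal A p := by
  have hsq : HasFDerivAt (fun x => C * ‖x - p‖ ^ 2) (innerSL ℝ 0) p := by
    simpa using (((hasFDerivAt_id p).sub_const p).norm_sq).const_mul C
  refine sub_mem_frechetNormal_of_hasFDerivAt (by simpa using hf.add hsq) fun x hx => ?_
  simp only [Pi.add_apply, sub_self, norm_zero]
  linarith [hu x hx]

lemma sq_rpow_half {r : ℝ} (hr : 0 ≤ r) (s : ℝ) : (r ^ 2) ^ (s / 2) = r ^ s := by
  rw [← Real.rpow_natCast, ← Real.rpow_mul hr]; push_cast; ring_nf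

lemma hasFDerivAt_norm_sub_rpow {b p : X} (hbp : b ≠ p) (q : ℝ) :
    HasFDerivAt (fun x => ‖b - x‖ ^ q) (innerSL ℝ (-(q * ‖b - p‖ ^ (q - 2)) • (b - p))) p := by
  have hsq := ((hasFDerivAt_id p).const_sub b).norm_sq.rpow_const (p := q / 2)
    (Or.inl (by simpa [sub_eq_zero] using hbp))
  simp only [id, sq_rpow_half (norm_nonneg _)] at hsq
  rw [show q / 2 - 1 = (q - 2) / 2 by ring, sq_rpow_half (norm_nonneg _)] at hsq
  convert hsq using 1
  refine ContinuousLinearMap.ext fun v => ?_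
  simp only [neg_smul, map_neg, map_smul, neg_apply,
    smul_apply, ContinuousLinearMap.comp_neg, ContinuousLinearMap.comp_id,
    coe_innerSL_apply, smul_eq_mul, nsmul_eq_mul, neg_sub, inner_sub_left, Nat.cast_ofNat]
  ring

lemma rpow_mul_infDist_frechetNormal_le {A : Set X} {b p u : X} {q K C : ℝ} (hbp : b ≠ p)
    (hq : 0 < q) (hu : ‖u‖ ≤ K)
    (hsub : ∀ x ∈ A, inner ℝ u (x - p) ≤ ‖b - x‖ ^ q - ‖b - p‖ ^ q + C * ‖x - p‖ ^ 2) :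
    ‖b - p‖ ^ (q - 2) * infDist (b - p) (frechetNormal A p) ≤ K / q := by
  have hr : 0 < ‖b - p‖ := norm_pos_iff.mpr (sub_ne_zero.mpr hbp)
  have hN : (q * ‖b - p‖ ^ (q - 2)) • (b - p) + u ∈ frechetNormal A p := by
    simpa [add_comm] using sub_mem_frechetNormal_of_proximal (hasFDerivAt_norm_sub_rpow hbp q) hsub
  calc _ ≤ ‖b - p‖ ^ (q - 2) * (K / (q * ‖b - p‖ ^ (q - 2))) := by
        gcongr
        exact (infDist_frechetNormal_le (by positivity) hN).trans (by gcongr)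
    _ = K / q := by field_simp

lemma exists_bp_parameters {ε₀ L M : ℝ} (hε₀ : 0 ≤ ε₀) (hL : 0 < L) (h : ε₀ < M * L) :
    ∃ K a μ ε : ℝ, 0 < K ∧ K < M ∧ 0 < a ∧ 0 < μ ∧ μ < 1 ∧ 0 < ε ∧
      ε₀ + ε < (1 - μ) * K * (L - a) := by
  obtain ⟨K, hK₀, hKM⟩ := exists_between ((div_lt_iff₀ hL).mpr h)
  have hKL : ε₀ < K * L := (div_lt_iff₀ hL).mp hK₀
  have hK : 0 < K := (div_nonneg hε₀ hL.le).trans_lt hK₀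
  have hKL₀ : 0 < K * L := by positivity
  obtain ⟨s, hs⟩ : ∃ s, s * (4 * (K * L)) = K * L - ε₀ := ⟨_, div_mul_cancel₀ _ (by positivity)⟩
  have hs0 : 0 < s := by nlinarith
  refine ⟨K, L * s, s, K * L * s, hK, hKM, by positivity, hs0, by nlinarith, by positivity, ?_⟩
  nlinarith [mul_pos hKL₀ (mul_pos hs0 hs0)]

end DistanceDecrease

theorem stmt17_general {X : Type*} [NormedAddCommGroup X] [InnerProductSpace ℝ X]
    [CompleteSpace X]
    (A : Set X) (hA : IsClosed A) (xbar : X) (hxbar : xbar ∈ A)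
    (δ lam q : ℝ) (hlam : 0 < lam) (hq : 0 < q)
    (b : X) (hb : b ∉ A)
    (hcond : ∀ a ∈ A ∩ Metric.ball xbar lam,
      ‖b - a‖ ^ q < (Metric.infDist b A) ^ q + q * lam * δ →
      δ ≤ ‖b - a‖ ^ (q - 2) * Metric.infDist (b - a) (frechetNormal A a)) :
    (Metric.infDist b A) ^ q ≤ ‖b - xbar‖ ^ q - q * lam * δ := by
  by_contra! hcon
  have hdist : ∀ x ∈ A, infDist b A ^ q ≤ ‖b - x‖ ^ q := fun x hx =>
    Real.rpow_le_rpow infDist_nonneg (dist_eq_norm b x ▸ infDist_le_dist_of_mem hx) hq.le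
  obtain ⟨K, a, μ, ε, hK, hKq, ha, hμ0, hμ1, hε, hbudget⟩ := exists_bp_parameters
    (sub_nonneg.mpr (hdist xbar hxbar)) hlam (by linarith : _ < q * δ * lam)
  obtain ⟨p, hpA, u, hu, hp, hsub⟩ := hA.borweinPreiss hxbar (f := fun x => ‖b - x‖ ^ q)
    (by fun_prop (disch := exact hq.le)) ⟨0, by rintro _ ⟨x, -, rfl⟩; positivity⟩ hK ha hμ0 hμ1 hε
  have hpball : ‖p - xbar‖ < lam := by nlinarith [hdist p hpA, mul_pos hK (sub_pos.mpr hμ1)]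
  have hpval : ‖b - p‖ ^ q < infDist b A ^ q + q * lam * δ := by
    nlinarith [mul_nonneg (mul_pos (sub_pos.mpr hμ1) hK).le (norm_nonneg (p - xbar)),
      mul_pos (mul_pos hμ0 hK) hlam, mul_pos (sub_pos.mpr hKq) hlam]
  have hδ := hcond p ⟨hpA, by rwa [mem_ball, dist_eq_norm]⟩ hpval
  have hnormal := rpow_mul_infDist_frechetNormal_le (fun h : b = p => hb (h ▸ hpA)) hq hu hsub
  linarith [(div_lt_iff₀ hq).mpr (by linarith : K < δ * q)]

/-- a sufficient dual condition for distance decrease in a Hilbert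
space; powers are real powers (`rpow`). -/
theorem stmt17 {X : Type*} [NormedAddCommGroup X] [InnerProductSpace ℝ X]
    [CompleteSpace X]
    (A : Set X) (hA : IsClosed A) (xbar : X) (hxbar : xbar ∈ A)
    (δ lam q : ℝ) (hδ : 0 < δ) (hlam : 0 < lam) (hq : 0 < q)
    (b : X) (hb : b ∉ A)
    (hcond : ∀ a ∈ A ∩ Metric.ball xbar lam,
      ‖b - a‖ ^ q < (Metric.infDist b A) ^ q + q * lam * δ →
      δ ≤ ‖b - a‖ ^ (q - 2) * Metric.infDist (b - a) (frechetNormal A a)) :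
    (Metric.infDist b A) ^ q ≤ ‖b - xbar‖ ^ q - q * lam * δ :=
  stmt17_general A hA xbar hxbar δ lam q hlam hq b hb hcond
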